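/- Let X and Y be Poisson random variables with parameters λ and μ. Then λ ≤ μ implies X ≤_wd Y. -/

import Mathlib

open MeasureTheory Set Filter
open scoped ENNReal NNReal

/-- The Lévy concentration function of a distribution `μ` on `ℝ`. -/
noncomputable def levyQ (μ : Measure ℝ) (ε : ℝ) : ℝ≥0∞ :=
  ⨆ x₀ : ℝ, μ (Set.Icc x₀ (x₀ + ε))

/-- `wdLE μ ν` : `Q_μ(ε) ≥ Q_ν(ε)` for all `ε > 0`. -/
def wdLE (μ ν : Measure ℝ) : Prop :=
  ∀ ε : ℝ, 0 < ε → levyQ ν ε ≤ levyQ μ ε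

/-- The distribution on `ℝ` of an `ℕ`-valued random variable with pmf `p`. -/
noncomputable def discMeasure (p : ℕ → ℝ≥0∞) : Measure ℝ :=
  Measure.sum (fun k : ℕ => p k • Measure.dirac (k : ℝ))

/-- The Poisson distribution with parameter , as a measure on . -/
noncomputable def poissonMeasure (a : ℝ) : Measure ℝ :=
  discMeasure (fun k : ℕ => ENNReal.ofReal (Real.exp (-a) * a ^ k / (Nat.factorial k)))

lemma discMeasure_apply (p : ℕ → ℝ≥0∞) {s : Set ℝ} (hs : MeasurableSet s) :
    discMeasure p s = ∑' k : ℕ, p k * s.indicator (fun _ => (1 : ℝ≥0∞)) (k : ℝ) := by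
  rw [discMeasure, Measure.sum_apply _ hs]
  refine tsum_congr fun k => ?_
  rw [Measure.smul_apply, Measure.dirac_apply' _ hs, smul_eq_mul]
  rfl

lemma poisson_pmf_tsum (c : ℝ) (hc : 0 ≤ c) :
    ∑' m : ℕ, ENNReal.ofReal (Real.exp (-c) * c ^ m / m.factorial) = 1 := by
  rw [← ENNReal.ofReal_tsum_of_nonneg]
  · have h1 : ∑' m : ℕ, Real.exp (-c) * c ^ m / m.factorial
        = Real.exp (-c) * ∑' m : ℕ, c ^ m / m.factorial := by
      rw [← tsum_mul_left]; simp [mul_div_assoc]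
    have h2 : ∑' m : ℕ, c ^ m / (m.factorial : ℝ) = Real.exp c := by
      rw [Real.exp_eq_exp_ℝ, NormedSpace.exp_eq_tsum_div]
    rw [h1, h2, ← Real.exp_add]
    simp
  · intro n
    positivity
  · have := (Real.summable_pow_div_factorial c).mul_left (Real.exp (-c))
    simpa [mul_div_assoc] using this

lemma poisson_conv_real (a c : ℝ) (k : ℕ) :
    Real.exp (-(a + c)) * (a + c) ^ k / k.factorial
      = ∑ j ∈ Finset.range (k + 1),
        (Real.exp (-a) * a ^ j / j.factorial) *
          (Real.exp (-c) * c ^ (k - j) / (k - j).factorial) := by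
  rw [add_pow]
  rw [Finset.mul_sum, Finset.sum_div]
  refine Finset.sum_congr rfl fun j hj => ?_
  have hjk : j ≤ k := Nat.lt_succ_iff.mp (Finset.mem_range.mp hj)
  have hch : (k.choose j : ℝ) = k.factorial / (j.factorial * (k - j).factorial) :=
    Nat.cast_choose ℝ hjk
  have h1 : (j.factorial : ℝ) ≠ 0 := Nat.cast_ne_zero.mpr j.factorial_ne_zero
  have h2 : ((k - j).factorial : ℝ) ≠ 0 := Nat.cast_ne_zero.mpr (k - j).factorial_ne_zero
  have h3 : (k.factorial : ℝ) ≠ 0 := Nat.cast_ne_zero.mpr k.factorial_ne_zero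
  rw [neg_add, Real.exp_add, hch]
  field_simp

theorem wdLE_poisson (a b : ℝ) (ha : 0 ≤ a) (hab : a ≤ b) :
    wdLE (poissonMeasure a) (poissonMeasure b) := by
  intro ε hε
  set c : ℝ := b - a with hc_def
  have hc : 0 ≤ c := sub_nonneg.mpr hab
  have hb : b = a + c := by ring
  set pA : ℕ → ℝ≥0∞ := fun j => ENNReal.ofReal (Real.exp (-a) * a ^ j / j.factorial) with hpA
  set pC : ℕ → ℝ≥0∞ := fun m => ENNReal.ofReal (Real.exp (-c) * c ^ m / m.factorial) with hpC
  -- ENNReal convolution identity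
  have hconv : ∀ k : ℕ,
      ENNReal.ofReal (Real.exp (-b) * b ^ k / k.factorial)
        = ∑ p ∈ Finset.HasAntidiagonal.antidiagonal k, pA p.1 * pC p.2 := by
    intro k
    rw [Finset.Nat.sum_antidiagonal_eq_sum_range_succ_mk, hb, poisson_conv_real a c k]
    rw [ENNReal.ofReal_sum_of_nonneg]
    · refine Finset.sum_congr rfl fun j _ => ?_
      rw [ENNReal.ofReal_mul (by positivity)]
    · intro j _
      positivity
  have hQ : ∀ x₀ : ℝ, poissonMeasure a (Set.Icc x₀ (x₀ + ε)) ≤ levyQ (poissonMeasure a) ε :=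
    fun x₀ => le_iSup (fun x₀ => poissonMeasure a (Set.Icc x₀ (x₀ + ε))) x₀
  rw [levyQ]
  refine iSup_le fun x₀ => ?_
  set I : Set ℝ := Set.Icc x₀ (x₀ + ε) with hI
  have hImeas : MeasurableSet I := measurableSet_Icc
  set ind : ℝ → ℝ≥0∞ := I.indicator (fun _ => (1 : ℝ≥0∞)) with hind
  have key : poissonMeasure b I
      = ∑' p : ℕ × ℕ, pA p.1 * pC p.2 * ind ((p.1 : ℝ) + (p.2 : ℝ)) := by
    rw [poissonMeasure, discMeasure_apply _ hImeas]
    have : ∀ k : ℕ, ENNReal.ofReal (Real.exp (-b) * b ^ k / k.factorial) * ind (k : ℝ)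
        = ∑ p ∈ Finset.HasAntidiagonal.antidiagonal k, pA p.1 * pC p.2 * ind ((p.1 : ℝ) + (p.2 : ℝ)) := by
      intro k
      rw [hconv k, Finset.sum_mul]
      refine Finset.sum_congr rfl fun p hp => ?_
      have : p.1 + p.2 = k := Finset.HasAntidiagonal.mem_antidiagonal.mp hp
      rw [← this]
      push_cast
      ring_nf
    calc ∑' k : ℕ, ENNReal.ofReal (Real.exp (-b) * b ^ k / k.factorial) * ind (k : ℝ)
        = ∑' k : ℕ, ∑ p ∈ Finset.HasAntidiagonal.antidiagonal k, pA p.1 * pC p.2 * ind ((p.1:ℝ) + (p.2:ℝ)) :=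
          tsum_congr this
      _ = ∑' k : ℕ, ∑' p : Finset.HasAntidiagonal.antidiagonal k,
            pA (p : ℕ × ℕ).1 * pC (p : ℕ × ℕ).2 * ind (((p : ℕ × ℕ).1:ℝ) + ((p : ℕ × ℕ).2:ℝ)) := by
          refine tsum_congr fun k => ?_
          exact (Finset.tsum_subtype (Finset.HasAntidiagonal.antidiagonal k)
            (fun p : ℕ × ℕ => pA p.1 * pC p.2 * ind ((p.1:ℝ) + (p.2:ℝ)))).symm
      _ = ∑' x : Σ k : ℕ, Finset.HasAntidiagonal.antidiagonal k,
            pA (x.2 : ℕ × ℕ).1 * pC (x.2 : ℕ × ℕ).2 * ind (((x.2 : ℕ × ℕ).1:ℝ) + ((x.2 : ℕ × ℕ).2:ℝ)) :=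
          (ENNReal.tsum_sigma' (fun x : Σ k : ℕ, Finset.HasAntidiagonal.antidiagonal k =>
            pA (x.2 : ℕ × ℕ).1 * pC (x.2 : ℕ × ℕ).2 *
              ind (((x.2 : ℕ × ℕ).1:ℝ) + ((x.2 : ℕ × ℕ).2:ℝ)))).symm
      _ = ∑' p : ℕ × ℕ, pA p.1 * pC p.2 * ind ((p.1:ℝ) + (p.2:ℝ)) := by
          exact Finset.HasAntidiagonal.sigmaAntidiagonalEquivProd.tsum_eq
            (fun p : ℕ × ℕ => pA p.1 * pC p.2 * ind ((p.1:ℝ) + (p.2:ℝ)))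
  rw [key]
  have step : ∑' p : ℕ × ℕ, pA p.1 * pC p.2 * ind ((p.1 : ℝ) + (p.2 : ℝ))
      ≤ ∑' m : ℕ, pC m * levyQ (poissonMeasure a) ε := by
    rw [ENNReal.tsum_prod']
    rw [ENNReal.tsum_comm]
    refine ENNReal.tsum_le_tsum fun m => ?_
    have inner : ∑' j : ℕ, pA j * pC m * ind ((j : ℝ) + (m : ℝ))
        = pC m * poissonMeasure a (Set.Icc (x₀ - m) (x₀ - m + ε)) := by
      rw [poissonMeasure, discMeasure_apply _ measurableSet_Icc, ← ENNReal.tsum_mul_left]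
      refine tsum_congr fun j => ?_
      have hiff : ((j : ℝ) + (m : ℝ) ∈ I) ↔ ((j : ℝ) ∈ Set.Icc (x₀ - m) (x₀ - m + ε)) := by
        simp only [hI, Set.mem_Icc]
        constructor <;> intro h <;> constructor <;> linarith [h.1, h.2]
      have : ind ((j : ℝ) + (m : ℝ))
          = (Set.Icc (x₀ - m) (x₀ - m + ε)).indicator (fun _ => (1 : ℝ≥0∞)) (j : ℝ) := by
        simp only [hind, Set.indicator_apply, hiff]
      rw [this]
      ring
    rw [inner]
    exact mul_le_mul_right (hQ (x₀ - m)) _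
  refine step.trans ?_
  rw [ENNReal.tsum_mul_right, hpC, poisson_pmf_tsum c hc, one_mul]
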